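/- Let f : ℝⁿ → ℝ be a convex function, C ⊆ ℝⁿ a nonempty, closed and convex set, x₀ ∈ C, τ ≥ 0, z ∈ ℝⁿ, and y = x₀ + z. Let f̂_{x₀}(x) = f(x₀) + sup_{s∈∂f(x₀)} ⟨s, x−x₀⟩ and Ĉ_{x₀} = x₀ + T_C(x₀). Let x̂ be the unique minimizer over x ∈ Ĉ_{x₀} of τ f̂_{x₀}(x) + (1/2)‖y − x‖₂². Then x̂ − x₀ = Π(z, τ∂f(x₀) + T_C(x₀)*), i.e. the error of the approximated problem equals the distance vector from z to the closed convex set τ∂f(x₀) + T_C(x₀)*. -/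

import Mathlib

open MeasureTheory ProbabilityTheory Filter Topology Metric
open scoped RealInnerProductSpace ENNReal Pointwise Matrix

noncomputable section

/-- Standard Gaussian measure on `ℝⁿ` (mean zero, identity covariance). -/
def stdGaussian (n : ℕ) : Measure (EuclideanSpace ℝ (Fin n)) :=
  Measure.map (⇑(EuclideanSpace.equiv (Fin n) ℝ).symm)
    (Measure.pi fun _ : Fin n => gaussianReal 0 1)

/-- `D(K)`: mean squared distance of a standard Gaussian vector to `K`. -/
def msd (n : ℕ) (K : Set (EuclideanSpace ℝ (Fin n))) : ℝ :=
  ∫ g, (Metric.infDist g K) ^ 2 ∂(stdGaussian n)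

variable {E : Type*} [NormedAddCommGroup E] [InnerProductSpace ℝ E]

/-- Subdifferential of `f` at `x₀`. -/
def subdiff (f : E → ℝ) (x₀ : E) : Set E :=
  {s | ∀ x, f x₀ + ⟪s, x - x₀⟫ ≤ f x}

/-- Cone generated by a set: `{c • x : c ≥ 0, x ∈ A}`. -/
def coneOf (A : Set E) : Set E :=
  {y | ∃ c : ℝ, 0 ≤ c ∧ ∃ x ∈ A, y = c • x}

/-- Set of feasible directions of `C` at `x₀`. -/
def feasible (C : Set E) (x₀ : E) : Set E := {z | x₀ + z ∈ C}

/-- Tangent cone of `C` at `x₀`: the closure of the cone of feasible directions. -/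
def tangentConeOf (C : Set E) (x₀ : E) : Set E := closure (coneOf (feasible C x₀))

/-- Polar cone of a set `K`. -/
def polarCone (K : Set E) : Set E := {v | ∀ x ∈ K, ⟪v, x⟫ ≤ 0}

open Classical in
/-- Metric projection onto `K` (the unique nearest point when `K` is nonempty,
closed and convex). -/
def projSet (K : Set E) (x : E) : E :=
  if h : ∃ y ∈ K, dist x y = Metric.infDist x K then h.choose else x

/-- Matrix-vector multiplication as a map between Euclidean spaces. -/
def matVec {m n : ℕ} (A : Matrix (Fin m) (Fin n) ℝ) (x : EuclideanSpace ℝ (Fin n)) :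
    EuclideanSpace ℝ (Fin m) :=
  (EuclideanSpace.equiv (Fin m) ℝ).symm (A.mulVec (EuclideanSpace.equiv (Fin n) ℝ x))

/-- Statistical dimension of `K`: `E ‖Proj(g,K)‖²` for standard Gaussian `g`. -/
def statDim (n : ℕ) (K : Set (EuclideanSpace ℝ (Fin n))) : ℝ :=
  ∫ g, ‖projSet K g‖ ^ 2 ∂(stdGaussian n)

end

/-- Borel/product measurable structure on real matrices. -/
instance matrixMeasurableSpace {m n : ℕ} : MeasurableSpace (Matrix (Fin m) (Fin n) ℝ) :=
  (inferInstance : MeasurableSpace (Fin m → Fin n → ℝ))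

/-!
Write `T = T_C(x₀)`, `D = ∂f(x₀)` and `p = Proj(z, τD + T*) = τ s₀ + v` with `s₀ ∈ D`, `v ∈ T*`.
Because `T*` is a cone, the variational inequality of the projection says that `w' = z - p` lies
in `T** = T`, is orthogonal to `v`, and maximises `⟨·, w'⟩` over `τD` at `τ s₀`. Hence
`p = z - w'` is a subgradient at `w'` of `w ↦ τ sup_{s ∈ D} ⟨s, w⟩` on `T`, which is the optimality
condition of the `1`-strongly convex objective `τ f̂(x₀ + w) + ½‖z - w‖²` on `T`; so `x̂ - x₀ = w'`.
The projection exists because `D` is nonempty (Hahn–Banach applied to the epigraph of `f`) and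
compact (`f` is continuous), which makes `τD + T*` closed.
-/

open Set

variable {E : Type*} [NormedAddCommGroup E] [InnerProductSpace ℝ E]

section Cones

lemma smul_mem_coneOf {A : Set E} {c : ℝ} (hc : 0 ≤ c) {x : E} (hx : x ∈ coneOf A) :
    c • x ∈ coneOf A := by
  obtain ⟨c', hc', a, ha, rfl⟩ := hx
  exact ⟨c * c', mul_nonneg hc hc', a, ha, smul_smul c c' a⟩

lemma add_mem_coneOf {A : Set E} (hA : Convex ℝ A) {x y : E}
    (hx : x ∈ coneOf A) (hy : y ∈ coneOf A) : x + y ∈ coneOf A := by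
  obtain ⟨c₁, hc₁, a₁, ha₁, rfl⟩ := hx
  obtain ⟨c₂, hc₂, a₂, ha₂, rfl⟩ := hy
  rcases (add_nonneg hc₁ hc₂).eq_or_lt with h | h
  · obtain ⟨rfl, rfl⟩ : c₁ = 0 ∧ c₂ = 0 := by constructor <;> linarith
    exact ⟨0, le_rfl, a₁, ha₁, by simp⟩
  · refine ⟨c₁ + c₂, h.le, (c₁ / (c₁ + c₂)) • a₁ + (c₂ / (c₁ + c₂)) • a₂,
      hA ha₁ ha₂ (div_nonneg hc₁ h.le) (div_nonneg hc₂ h.le) (by field_simp), ?_⟩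
    rw [smul_add, smul_smul, smul_smul, mul_div_cancel₀ _ h.ne', mul_div_cancel₀ _ h.ne']

def coneOfPointedCone {A : Set E} (hA : Convex ℝ A) (h₀ : (0 : E) ∈ A) : PointedCone ℝ E where
  carrier := coneOf A
  add_mem' := add_mem_coneOf hA
  zero_mem' := ⟨0, le_rfl, 0, h₀, (smul_zero 0).symm⟩
  smul_mem' c _ hx := smul_mem_coneOf c.2 hx

lemma convex_feasible {C : Set E} (hC : Convex ℝ C) (x₀ : E) : Convex ℝ (feasible C x₀) := by
  simpa [feasible, preimage, add_comm] using hC.translate_preimage_right x₀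

def tangentProperCone {C : Set E} {x₀ : E} (hC : Convex ℝ C) (hx₀ : x₀ ∈ C) : ProperCone ℝ E :=
  Submodule.closure (coneOfPointedCone (convex_feasible hC x₀) (by simpa [feasible] using hx₀))

variable [CompleteSpace E]

noncomputable def polarProperCone (s : Set E) : ProperCone ℝ E :=
  (ProperCone.innerDual s).comap (-ContinuousLinearMap.id ℝ E)

lemma coe_polarProperCone (s : Set E) : (polarProperCone s : Set E) = polarCone s := by
  ext v
  simp [polarProperCone, polarCone, inner_neg_right, real_inner_comm]

lemma ProperCone.mem_of_forall_polarCone_inner_nonpos (K : ProperCone ℝ E) {w : E}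
    (hw : ∀ v ∈ polarCone (K : Set E), ⟪w, v⟫ ≤ 0) : w ∈ K := by
  by_contra hwK
  obtain ⟨y, hyK, hyw⟩ := K.hyperplane_separation' hwK
  have hy : -y ∈ polarCone (K : Set E) := fun x hx => by
    rw [inner_neg_left, real_inner_comm]
    linarith [hyK x hx]
  linarith [hw _ hy, inner_neg_right (𝕜 := ℝ) w y]

end Cones

section Subdiff

variable {f : E → ℝ} {x₀ : E}

lemma isClosed_subdiff : IsClosed (subdiff f x₀) := by
  simp only [subdiff, Set.ofPred_forall]
  exact isClosed_iInter fun x =>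
    isClosed_le (continuous_const.add (continuous_id.inner continuous_const)) continuous_const

lemma convex_subdiff : Convex ℝ (subdiff f x₀) := by
  intro s₁ h₁ s₂ h₂ a b ha hb hab x
  have i₁ := mul_le_mul_of_nonneg_left (h₁ x) ha
  have i₂ := mul_le_mul_of_nonneg_left (h₂ x) hb
  rw [inner_add_left, real_inner_smul_left, real_inner_smul_left]
  linear_combination i₁ + i₂ + (f x - f x₀) * hab

lemma isBounded_subdiff (hf : ContinuousAt f x₀) : Bornology.IsBounded (subdiff f x₀) := by
  obtain ⟨δ, hδ, hball⟩ := Metric.continuousAt_iff.1 hf 1 one_pos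
  refine (Metric.isBounded_iff_subset_closedBall 0).2 ⟨2 / δ, fun s hs => ?_⟩
  rw [mem_closedBall_zero_iff, le_div_iff₀ hδ]
  rcases eq_or_ne s 0 with rfl | hs0
  · simp
  -- test the subgradient inequality at distance `δ / 2` from `x₀` in the direction of `s`
  set x := x₀ + (δ / 2 / ‖s‖) • s
  have hsn : 0 < ‖s‖ := norm_pos_iff.2 hs0
  have hinner : ⟪s, x - x₀⟫ = δ / 2 * ‖s‖ := by
    rw [add_sub_cancel_left, real_inner_smul_right, real_inner_self_eq_norm_sq]
    field_simp
  have hdist : dist x x₀ < δ := by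
    rw [dist_eq_norm, add_sub_cancel_left, norm_smul, Real.norm_of_nonneg (by positivity),
      div_mul_cancel₀ _ hsn.ne']
    linarith
  have hfx := (abs_lt.1 (Real.dist_eq (f x) (f x₀) ▸ hball hdist)).2
  have := hs x
  nlinarith

lemma isCompact_subdiff [ProperSpace E] (hf : Continuous f) (x₀ : E) :
    IsCompact (subdiff f x₀) :=
  Metric.isCompact_of_isClosed_isBounded isClosed_subdiff (isBounded_subdiff hf.continuousAt)

variable [CompleteSpace E]

lemma subdiff_nonempty (hf : ConvexOn ℝ univ f) (hfc : Continuous f) (x₀ : E) :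
    (subdiff f x₀).Nonempty := by
  set S : Set (E × ℝ) := {p | p.1 ∈ univ ∧ f p.1 < p.2}
  have hSopen : IsOpen S := by
    simpa [S] using isOpen_lt (hfc.comp continuous_fst) continuous_snd
  obtain ⟨L, hL⟩ := geometric_hahn_banach_open_point hf.convex_strict_epigraph hSopen
    (by simp [S] : (x₀, f x₀) ∉ S)
  set c : ℝ := L (0, 1)
  have hsplit (x : E) (t : ℝ) : L (x, t) = L (x, 0) + t * c := by
    have hxt : ((x, t) : E × ℝ) = (x, 0) + t • (0, 1) := by ext <;> simp
    rw [hxt, map_add, L.map_smul, smul_eq_mul]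
  have hlt (x : E) (t : ℝ) (ht : f x < t) : L (x, 0) + t * c < L (x₀, 0) + f x₀ * c := by
    have := hL (x, t) ⟨mem_univ _, ht⟩
    rwa [hsplit x t, hsplit x₀ (f x₀)] at this
  have hc : c < 0 := by linarith [hlt x₀ (f x₀ + 1) (by linarith)]
  -- the separating hyperplane is not vertical, so it is the graph of an affine minorant of `f`
  have hle (x : E) : L (x, 0) + f x * c ≤ L (x₀, 0) + f x₀ * c := by
    refine le_of_forall_pos_lt_add fun ε hε => ?_
    have := hlt x (f x + ε / -c) (by linarith [div_pos hε (neg_pos.2 hc)])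
    rw [add_mul, div_mul_eq_mul_div, div_neg, mul_div_cancel_right₀ _ hc.ne] at this
    linarith
  refine ⟨(InnerProductSpace.toDual ℝ E).symm ((-c)⁻¹ • L.comp (.inl ℝ E ℝ)), fun x => ?_⟩
  have hinner : ⟪(InnerProductSpace.toDual ℝ E).symm ((-c)⁻¹ • L.comp (.inl ℝ E ℝ)), x - x₀⟫
      = (-c)⁻¹ * (L (x, 0) - L (x₀, 0)) := by
    rw [map_smul, real_inner_smul_left, InnerProductSpace.toDual_symm_apply]
    simp [← map_sub]
  rw [hinner, ← le_sub_iff_add_le', inv_mul_le_iff₀ (neg_pos.2 hc)]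
  linarith [hle x]

end Subdiff

section Projection

lemma projSet_mem_and_inner_le [ProperSpace E] {K : Set E} (hne : K.Nonempty)
    (hcl : IsClosed K) (hconv : Convex ℝ K) (z : E) :
    projSet K z ∈ K ∧ ∀ k ∈ K, ⟪z - projSet K z, k - projSet K z⟫ ≤ 0 := by
  have hex : ∃ y ∈ K, dist z y = Metric.infDist z K := by
    obtain ⟨y, hy, h⟩ := hcl.exists_infDist_eq_dist hne z
    exact ⟨y, hy, h.symm⟩
  rw [projSet, dif_pos hex]
  obtain ⟨hpK, hpd⟩ := hex.choose_spec
  have : Nonempty K := hne.to_subtype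
  refine ⟨hpK, (norm_eq_iInf_iff_real_inner_le_zero hconv hpK).1 ?_⟩
  rw [← dist_eq_norm, hpd, Metric.infDist_eq_iInf]
  simp only [dist_eq_norm]

/-- For a cone `P`, the variational inequality characterising `a + v` as the projection of `z`
onto `A + P` splits into a condition on `A` and two on `P`. -/
lemma inner_sub_add_le_of_forall_inner_le {A : Set E} {P : ProperCone ℝ E} {z a v : E}
    (ha : a ∈ A) (hv : v ∈ P)
    (hvar : ∀ k ∈ A + (P : Set E), ⟪z - (a + v), k - (a + v)⟫ ≤ 0) :
    (∀ a' ∈ A, ⟪z - (a + v), a' - a⟫ ≤ 0) ∧ ⟪z - (a + v), v⟫ = 0 ∧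
      ∀ v' ∈ P, ⟪z - (a + v), v'⟫ ≤ 0 := by
  have hA (a' : E) (ha' : a' ∈ A) := hvar _ (add_mem_add ha' hv)
  have hP (v' : E) (hv' : v' ∈ P) := hvar _ (add_mem_add ha (P.add_mem hv hv'))
  have h₀ := hvar _ (add_mem_add ha P.zero_mem)
  simp only [add_sub_add_right_eq_sub, add_sub_add_left_eq_sub, add_sub_cancel_left,
    add_zero, sub_add_cancel_left, inner_neg_right] at hA hP h₀
  exact ⟨hA, le_antisymm (by simpa using hP v hv) (by linarith), hP⟩

end Projection

section ProximalModel

lemma mul_sSup_inner_add_inner_le {D T : Set E} (hD : IsCompact D) {τ : ℝ} (hτ : 0 ≤ τ)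
    {s₀ v w' w : E} (hs₀ : s₀ ∈ D) (hmax : ∀ s ∈ D, ⟪w', τ • s - τ • s₀⟫ ≤ 0)
    (hperp : ⟪w', v⟫ = 0) (hv : v ∈ polarCone T) (hw : w ∈ T) :
    τ * sSup ((fun s => ⟪s, w'⟫) '' D) + ⟪τ • s₀ + v, w - w'⟫ ≤
      τ * sSup ((fun s => ⟪s, w⟫) '' D) := by
  have hsup_w' : τ * sSup ((fun s => ⟪s, w'⟫) '' D) ≤ τ * ⟪s₀, w'⟫ := by
    rcases hτ.eq_or_lt with rfl | hτ
    · simp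
    refine mul_le_mul_of_nonneg_left (csSup_le ⟨_, mem_image_of_mem _ hs₀⟩
      (forall_mem_image.2 fun s hs => ?_)) hτ.le
    have := hmax s hs
    rw [inner_sub_right, real_inner_smul_right, real_inner_smul_right, real_inner_comm s,
      real_inner_comm s₀] at this
    nlinarith
  have hsup_w : ⟪s₀, w⟫ ≤ sSup ((fun s => ⟪s, w⟫) '' D) :=
    le_csSup (hD.bddAbove_image (continuous_id.inner continuous_const).continuousOn)
      (mem_image_of_mem _ hs₀)
  have hvw := hv w hw
  rw [inner_add_left, inner_sub_right, inner_sub_right, real_inner_smul_left,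
    real_inner_smul_left, real_inner_comm w' v, hperp]
  nlinarith

/-- `w ↦ g w + ½‖z - w‖²` is `1`-strongly convex, and `w'` satisfies its first-order optimality
condition on `S`, so `w'` is its only minimiser on `S`. -/
lemma eq_of_le_of_forall_subgradient {g : E → ℝ} {S : Set E} {z w' ŵ : E}
    (hg : ∀ w ∈ S, g w' + ⟪z - w', w - w'⟫ ≤ g w) (hŵ : ŵ ∈ S)
    (hle : g ŵ + 1 / 2 * ‖z - ŵ‖ ^ 2 ≤ g w' + 1 / 2 * ‖z - w'‖ ^ 2) : ŵ = w' := by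
  have hsq : ‖z - ŵ‖ ^ 2 = ‖z - w'‖ ^ 2 - 2 * ⟪z - w', ŵ - w'⟫ + ‖ŵ - w'‖ ^ 2 := by
    rw [← norm_sub_sq_real, sub_sub_sub_cancel_right]
  have : ‖ŵ - w'‖ ^ 2 ≤ 0 := by linarith [hg ŵ hŵ]
  rw [← sub_eq_zero, ← norm_eq_zero]
  exact pow_eq_zero_iff two_ne_zero |>.1 (le_antisymm this (sq_nonneg _))

end ProximalModel

theorem statement9_general {n : ℕ} (f : EuclideanSpace ℝ (Fin n) → ℝ)
    (hf : ConvexOn ℝ Set.univ f)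
    (C : Set (EuclideanSpace ℝ (Fin n)))
    (hCconv : Convex ℝ C)
    (x₀ : EuclideanSpace ℝ (Fin n)) (hx₀ : x₀ ∈ C)
    (τ : ℝ) (hτ : 0 ≤ τ) (z : EuclideanSpace ℝ (Fin n))
    (xhat : EuclideanSpace ℝ (Fin n))
    (hmem : xhat ∈ (fun w => x₀ + w) '' tangentConeOf C x₀)
    (hmin : IsMinOn
      (fun x => τ * (f x₀ + sSup ((fun s => ⟪s, x - x₀⟫) '' subdiff f x₀)) +
        (1 / 2) * ‖(x₀ + z) - x‖ ^ 2)
      ((fun w => x₀ + w) '' tangentConeOf C x₀) xhat) :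
    xhat - x₀ =
      z - projSet (τ • subdiff f x₀ + polarCone (tangentConeOf C x₀)) z := by
  obtain ⟨ŵ, hŵT, rfl⟩ := hmem
  set D := subdiff f x₀
  set P := polarProperCone (tangentConeOf C x₀)
  have hfc : Continuous f := continuousOn_univ.1 (hf.continuousOn isOpen_univ)
  rw [← coe_polarProperCone]
  obtain ⟨hpK, hvar⟩ := projSet_mem_and_inner_le
    ((subdiff_nonempty hf hfc x₀).smul_set.add P.nonempty)
    (P.isClosed.add_left_of_isCompact ((isCompact_subdiff hfc x₀).smul τ))
    ((convex_subdiff.smul τ).add P.convex) z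
  obtain ⟨_, ⟨s₀, hs₀, rfl⟩, v, hv, hp⟩ := hpK
  beta_reduce at hp hmin ⊢
  rw [← hp] at hvar ⊢
  obtain ⟨hmaxD, hperp, hpolar⟩ := inner_sub_add_le_of_forall_inner_le
    (smul_mem_smul_set hs₀) hv hvar
  have hw'T : z - (τ • s₀ + v) ∈ tangentConeOf C x₀ :=
    (tangentProperCone hCconv hx₀).mem_of_forall_polarCone_inner_nonpos fun v' hv' =>
      hpolar v' (by rwa [← coe_polarProperCone] at hv')
  refine (add_sub_cancel_left x₀ ŵ).trans <| eq_of_le_of_forall_subgradient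
    (z := z) (g := fun w => τ * (f x₀ + sSup ((fun s => ⟪s, w⟫) '' D))) (fun w hw => ?_) hŵT ?_
  · have := mul_sSup_inner_add_inner_le (isCompact_subdiff hfc x₀) hτ hs₀
      (fun s hs => hmaxD _ (smul_mem_smul_set hs)) hperp
      (by rw [← coe_polarProperCone]; exact hv) hw
    rw [sub_sub_cancel]
    linarith
  · simpa only [add_sub_cancel_left, add_sub_add_left_eq_sub] using
      isMinOn_iff.1 hmin _ ⟨_, hw'T, rfl⟩

/-- Exact solution of the first-order approximated problem.
If `x̂` minimizes `τ f̂_{x₀}(x) + ½‖(x₀+z) − x‖²` over `Ĉ_{x₀} = x₀ + T_C(x₀)`,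
then `x̂ − x₀ = Π(z, τ∂f(x₀) + T_C(x₀)*) = z − Proj(z, τ∂f(x₀) + T_C(x₀)*)`. -/
theorem statement9 {n : ℕ} (f : EuclideanSpace ℝ (Fin n) → ℝ)
    (hf : ConvexOn ℝ Set.univ f)
    (C : Set (EuclideanSpace ℝ (Fin n)))
    (hCne : C.Nonempty) (hCcl : IsClosed C) (hCconv : Convex ℝ C)
    (x₀ : EuclideanSpace ℝ (Fin n)) (hx₀ : x₀ ∈ C)
    (τ : ℝ) (hτ : 0 ≤ τ) (z : EuclideanSpace ℝ (Fin n))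
    (xhat : EuclideanSpace ℝ (Fin n))
    (hmem : xhat ∈ (fun w => x₀ + w) '' tangentConeOf C x₀)
    (hmin : IsMinOn
      (fun x => τ * (f x₀ + sSup ((fun s => ⟪s, x - x₀⟫) '' subdiff f x₀)) +
        (1 / 2) * ‖(x₀ + z) - x‖ ^ 2)
      ((fun w => x₀ + w) '' tangentConeOf C x₀) xhat) :
    xhat - x₀ =
      z - projSet (τ • subdiff f x₀ + polarCone (tangentConeOf C x₀)) z :=
  statement9_general f hf C hCconv x₀ hx₀ τ hτ z xhat hmem hmin
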